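/- arXiv:math/0205068 — 2 statements merged into one kernel-verified Lean document; each statement's English description precedes it below -/
import Mathlib

section
/- Let f ∈ ℂ[x,y] have only isolated critical points, and let A : V → V be the ℂ-linear operator on V = ℂ[x,y]/⟨f_x, f_y⟩ given by multiplication by f. Then the set of eigenvalues of A equals the set of critical values of f. -/
open MvPolynomial

noncomputable section

abbrev P2 : Type := MvPolynomial (Fin 2) ℂ

def evP (p : ℂ × ℂ) (g : P2) : ℂ := MvPolynomial.eval ![p.1, p.2] g

def CritSet (f : P2) : Set (ℂ × ℂ) :=
  {p | evP p (pderiv 0 f) = 0 ∧ evP p (pderiv 1 f) = 0}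

def Jac (f : P2) : Ideal P2 := Ideal.span {pderiv 0 f, pderiv 1 f}

/-- Multiplication by (the class of) `f` as a ℂ-linear endomorphism of `V = ℂ[x,y]/⟨f_x,f_y⟩`. -/
def multf (f : P2) : Module.End ℂ (P2 ⧸ Jac f) :=
  Algebra.lmul ℂ (P2 ⧸ Jac f) (Ideal.Quotient.mk (Jac f) f)

/-! `c` is an eigenvalue of multiplication by `f` on `K[X]/I` exactly when `f - c` is a zero
divisor there. If `f ≠ c` on the zero locus of `I`, the Nullstellensatz makes `f - c` a unit
modulo `I`. If `f p = c` at a point `p` of the finite zero locus, take `g` with `g p ≠ 0`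
vanishing at the other points: `(f - c) * g` vanishes on the whole zero locus, so
`((f - c) * g) ^ n ∈ I` for some `n` while `g ^ n ∉ I`, and `f - c` is a zero divisor.
For the Jacobian ideal the zero locus is the critical set. -/

open nonZeroDivisors

theorem Algebra.hasEigenvalue_lmul_iff {R A : Type*} [CommRing R] [CommRing A] [Algebra R A]
    (a : A) (c : R) :
    (Algebra.lmul R A a).HasEigenvalue c ↔ a - algebraMap R A c ∉ A⁰ := by
  simp only [Module.End.hasEigenvalue_iff, Submodule.ne_bot_iff, Module.End.mem_eigenspace_iff,
    mem_nonZeroDivisors_iff_left, Algebra.coe_lmul_eq_mul, LinearMap.mul_apply',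
    Algebra.smul_def, sub_mul, sub_eq_zero]
  push Not
  rfl

theorem notMem_nonZeroDivisors_of_pow_mul_eq_zero {M₀ : Type*} [CommMonoidWithZero M₀]
    {a b : M₀} {n : ℕ} (h : a ^ n * b = 0) (hb : b ≠ 0) : a ∉ M₀⁰ :=
  fun ha => hb (mem_nonZeroDivisors_iff_left.mp (pow_mem ha n) b h)

theorem Ideal.Quotient.isUnit_mk_of_sup_eq_top {R : Type*} [CommRing R] {I : Ideal R} {g : R}
    (h : Ideal.span {g} ⊔ I = ⊤) : IsUnit (Ideal.Quotient.mk I g) := by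
  obtain ⟨a, b, hb, hab⟩ := Ideal.mem_span_singleton_sup.mp (h ▸ Submodule.mem_top : (1 : R) ∈ _)
  refine IsUnit.of_mul_eq_one_right (Ideal.Quotient.mk I a) ?_
  rw [← map_mul, ← map_one (Ideal.Quotient.mk I), Ideal.Quotient.eq, ← hab, sub_add_cancel_left]
  exact I.neg_mem hb

namespace MvPolynomial

theorem exists_eval_ne_zero_forall_eval_eq_zero {σ R : Type*} [CommRing R] [IsDomain R]
    (p : σ → R) (S : Finset (σ → R)) (hp : p ∉ S) :
    ∃ g : MvPolynomial σ R, eval p g ≠ 0 ∧ ∀ q ∈ S, eval q g = 0 := by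
  classical
  induction S using Finset.induction_on with
  | empty => exact ⟨1, by simp, by simp⟩
  | insert q S _ ih =>
    obtain ⟨hpq, hpS⟩ : p ≠ q ∧ p ∉ S := by simpa using hp
    obtain ⟨g, hgp, hgS⟩ := ih hpS
    obtain ⟨i, hi⟩ := Function.ne_iff.mp hpq
    refine ⟨(X i - C (q i)) * g, by simpa [sub_eq_zero] using ⟨hi, hgp⟩, fun r hr => ?_⟩
    obtain rfl | hr := Finset.mem_insert.mp hr
    · simp
    · simp [hgS r hr]

variable {σ K : Type*} [Field K] [Finite σ] [IsAlgClosed K]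

theorem isUnit_mk_of_forall_mem_zeroLocus_eval_ne_zero (I : Ideal (MvPolynomial σ K))
    (g : MvPolynomial σ K) (h : ∀ x ∈ zeroLocus K I, eval x g ≠ 0) :
    IsUnit (Ideal.Quotient.mk I g) := by
  refine Ideal.Quotient.isUnit_mk_of_sup_eq_top ?_
  have hempty : zeroLocus K (Ideal.span {g} ⊔ I) = ∅ :=
    Set.eq_empty_of_forall_notMem fun x hx => h x (zeroLocus_anti_mono le_sup_right hx)
      (by simpa using hx g (Ideal.mem_sup_left (Ideal.mem_span_singleton_self g)))
  rw [← Ideal.radical_eq_top, ← vanishingIdeal_zeroLocus_eq_radical (K := K), hempty,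
    vanishingIdeal_empty]

theorem exists_pow_mem_of_forall_mem_zeroLocus_eval_eq_zero (I : Ideal (MvPolynomial σ K))
    (g : MvPolynomial σ K) (h : ∀ x ∈ zeroLocus K I, eval x g = 0) : ∃ n, g ^ n ∈ I := by
  have hg : g ∈ vanishingIdeal K (zeroLocus K I) := fun x hx => by simpa using h x hx
  rwa [vanishingIdeal_zeroLocus_eq_radical] at hg

theorem hasEigenvalue_lmul_mk_iff {I : Ideal (MvPolynomial σ K)} (hI : (zeroLocus K I).Finite)
    (f : MvPolynomial σ K) (c : K) :
    (Algebra.lmul K _ (Ideal.Quotient.mk I f)).HasEigenvalue c ↔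
      ∃ x ∈ zeroLocus K I, eval x f = c := by
  classical
  have hmk : Ideal.Quotient.mk I f - algebraMap K _ c = Ideal.Quotient.mk I (f - C c) := by
    rw [map_sub, ← Ideal.Quotient.mk_algebraMap, algebraMap_eq]
  rw [Algebra.hasEigenvalue_lmul_iff, hmk]
  constructor
  · intro h
    by_contra! hc
    refine h (isUnit_mk_of_forall_mem_zeroLocus_eval_ne_zero I _ fun x hx => ?_).mem_nonZeroDivisors
    simpa [sub_eq_zero] using hc x hx
  · rintro ⟨p, hp, rfl⟩
    obtain ⟨g, hgp, hgS⟩ :=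
      exists_eval_ne_zero_forall_eval_eq_zero p (hI.toFinset.erase p) (by simp)
    obtain ⟨n, hn⟩ := exists_pow_mem_of_forall_mem_zeroLocus_eval_eq_zero I
      ((f - C (eval p f)) * g) fun x hx => by
        by_cases hxp : x = p
        · simp [hxp]
        · simp [hgS x (by simpa [hxp] using hx)]
    refine notMem_nonZeroDivisors_of_pow_mul_eq_zero (n := n) (b := Ideal.Quotient.mk I (g ^ n))
      ?_ ?_
    · rwa [← map_pow, ← map_mul, ← mul_pow, Ideal.Quotient.eq_zero_iff_mem]
    · rw [Ne, Ideal.Quotient.eq_zero_iff_mem]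
      intro hgn
      exact hgp (pow_eq_zero_iff' .. |>.mp (by simpa using hp _ hgn)).1

end MvPolynomial

theorem zeroLocus_Jac (f : P2) :
    zeroLocus ℂ (Jac f) = (fun p : ℂ × ℂ => ![p.1, p.2]) '' CritSet f := by
  ext x
  simp only [Jac, zeroLocus_span, CritSet, evP, Set.forall_mem_insert, Set.mem_singleton_iff,
    forall_eq, Set.mem_ofPred_eq, aeval_eq_eval, Set.mem_image, Prod.exists]
  refine ⟨fun hx => ⟨x 0, x 1, ?_⟩, fun ⟨a, b, hab, hx⟩ => hx ▸ hab⟩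
  rw [show ![x 0, x 1] = x from FinVec.etaExpand_eq x]
  exact ⟨hx, rfl⟩

theorem eigenvalues_eq_critical_values (f : P2) (hfin : (CritSet f).Finite) (c : ℂ) :
    (multf f).HasEigenvalue c ↔ ∃ p ∈ CritSet f, evP p f = c := by
  have h := hasEigenvalue_lmul_mk_iff (zeroLocus_Jac f ▸ hfin.image _) f c
  rwa [zeroLocus_Jac, Set.exists_mem_image] at h

end
end

section
/- Let l_0, …, l_d be affine-linear polynomials over ℂ defining d+1 lines in general position (no two parallel, no three concurrent), and let B_1, …, B_{d(d+1)/2} be their pairwise intersection points. Then the evaluation map ℂ[x,y]_{≤ d+1} → ℂ^{d(d+1)/2}, P ↦ (P(B_m))_m, is surjective. -/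
/- STATEMENT 10: for d+1 lines in general position in ℂ² the evaluation map
ℂ[x,y]_{≤d+1} → ℂ^{intersection points}, P ↦ (P(B_m))_m, is surjective. -/

open MvPolynomial Finset

noncomputable section

/-! Lagrange interpolation. For an intersection point `p`, the product of the lines not passing
through `p` does not vanish at `p`, has degree at most `d + 1`, and vanishes at every other
intersection point `q`: `q` lies on two lines, and these cannot both pass through `p`, since two
non-parallel lines meet only once. -/

namespace MvPolynomial

variable {σ R ι : Type*}

theorem exists_totalDegree_le_eval_eq_of_separating [Field R] (s : Finset ι) (x : ι → σ → R)
    (Q : ι → MvPolynomial σ R) {n : ℕ} (hdeg : ∀ i ∈ s, (Q i).totalDegree ≤ n)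
    (hself : ∀ i ∈ s, eval (x i) (Q i) ≠ 0)
    (hother : ∀ i ∈ s, ∀ j ∈ s, j ≠ i → eval (x j) (Q i) = 0) (g : ι → R) :
    ∃ P : MvPolynomial σ R, P.totalDegree ≤ n ∧ ∀ j ∈ s, eval (x j) P = g j := by
  refine ⟨∑ i ∈ s, (g i / eval (x i) (Q i)) • Q i, ?_, fun j hj => ?_⟩
  · refine (totalDegree_finsetSum _ _).trans (Finset.sup_le fun i hi => ?_)
    exact (totalDegree_smul_le _ _).trans (hdeg i hi)
  · rw [map_sum, Finset.sum_eq_single_of_mem j hj fun i hi hij => by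
      rw [smul_eval, hother i hi j hj hij.symm, mul_zero]]
    rw [smul_eval, div_mul_cancel₀ _ (hself j hj)]

theorem totalDegree_prod_le_card [CommSemiring R] (s : Finset ι) (f : ι → MvPolynomial σ R)
    (hf : ∀ k ∈ s, (f k).totalDegree ≤ 1) : (∏ k ∈ s, f k).totalDegree ≤ #s :=
  (totalDegree_finsetProd s f).trans <| by simpa using Finset.sum_le_card_nsmul s _ 1 hf

theorem totalDegree_C_mul_X_add_C_mul_X_add_C_le_one [CommSemiring R] [Nontrivial R]
    (a b c : R) (i j : σ) : (C a * X i + C b * X j + C c : MvPolynomial σ R).totalDegree ≤ 1 := by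
  refine (totalDegree_add _ _).trans (max_le ((totalDegree_add _ _).trans (max_le ?_ ?_)) ?_)
  · rw [C_mul']; exact (totalDegree_smul_le _ _).trans (totalDegree_X _).le
  · rw [C_mul']; exact (totalDegree_smul_le _ _).trans (totalDegree_X _).le
  · simp

theorem eval_prod_filter_ne_zero [CommRing R] [NoZeroDivisors R] [Nontrivial R] [DecidableEq R]
    (s : Finset ι) (f : ι → MvPolynomial σ R) (x : σ → R) :
    eval x (∏ k ∈ s with eval x (f k) ≠ 0, f k) ≠ 0 := by
  rw [map_prod, Finset.prod_ne_zero_iff]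
  exact fun k hk => (Finset.mem_filter.1 hk).2

theorem eval_prod_filter_eq_zero [CommSemiring R] [DecidableEq R] {s : Finset ι}
    {f : ι → MvPolynomial σ R} {x y : σ → R} {k : ι} (hk : k ∈ s) (hxk : eval x (f k) ≠ 0)
    (hyk : eval y (f k) = 0) : eval y (∏ k ∈ s with eval x (f k) ≠ 0, f k) = 0 := by
  rw [map_prod]
  exact Finset.prod_eq_zero (Finset.mem_filter.2 ⟨hk, hxk⟩) hyk

end MvPolynomial

theorem Prod.eq_of_affine_eq_zero_of_mul_ne_mul {R : Type*} [CommRing R] [IsDomain R]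
    {a b c a' b' c' : R} (hab : a * b' ≠ a' * b) {p q : R × R}
    (hp : a * p.1 + b * p.2 + c = 0) (hp' : a' * p.1 + b' * p.2 + c' = 0)
    (hq : a * q.1 + b * q.2 + c = 0) (hq' : a' * q.1 + b' * q.2 + c' = 0) : p = q := by
  have hdet : a * b' - a' * b ≠ 0 := sub_ne_zero.2 hab
  refine Prod.ext (mul_left_cancel₀ hdet ?_) (mul_left_cancel₀ hdet ?_)
  · linear_combination b' * hp - b * hp' - b' * hq + b * hq'
  · linear_combination a * hp' - a' * hp - a * hq' + a' * hq

theorem evP_C_mul_X_add_C_mul_X_add_C (p : ℂ × ℂ) (a b c : ℂ) :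
    evP p (C a * X 0 + C b * X 1 + C c) = a * p.1 + b * p.2 + c := by
  simp [evP]

theorem evaluation_at_intersection_points_surjective_general (d : ℕ) (a b c : Fin (d + 1) → ℂ)
    (l : Fin (d + 1) → P2)
    (hl : ∀ i, l i = C (a i) * X 0 + C (b i) * X 1 + C (c i))
    (hpar : ∀ i j, i ≠ j → a i * b j ≠ a j * b i) :
    ∀ g : ℂ × ℂ → ℂ, ∃ P : P2, P.totalDegree ≤ d + 1 ∧
      ∀ p : ℂ × ℂ, (∃ i j, i ≠ j ∧ evP p (l i) = 0 ∧ evP p (l j) = 0) → evP p P = g p := by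
  intro g
  have hmeet : ∀ i j, i ≠ j → ∀ p q : ℂ × ℂ, evP p (l i) = 0 → evP p (l j) = 0 →
      evP q (l i) = 0 → evP q (l j) = 0 → p = q := by
    intro i j hij p q
    simp only [hl, evP_C_mul_X_add_C_mul_X_add_C]
    exact Prod.eq_of_affine_eq_zero_of_mul_ne_mul (hpar i j hij)
  set S := {p : ℂ × ℂ | ∃ i j, i ≠ j ∧ evP p (l i) = 0 ∧ evP p (l j) = 0}
  have hS : S.Finite := by
    have hS_eq : S = ⋃ i, ⋃ j, {p | i ≠ j ∧ evP p (l i) = 0 ∧ evP p (l j) = 0} := by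
      ext; simp [S]
    rw [hS_eq]
    exact Set.finite_iUnion fun i => Set.finite_iUnion fun j => Set.Subsingleton.finite
      fun p ⟨hij, hpi, hpj⟩ q ⟨_, hqi, hqj⟩ => hmeet i j hij p q hpi hpj hqi hqj
  have hvanish : ∀ p, ∀ q ∈ hS.toFinset, q ≠ p →
      evP q (∏ k ∈ univ with evP p (l k) ≠ 0, l k) = 0 := by
    intro p q hq hqp
    obtain ⟨i, j, hij, hqi, hqj⟩ := hS.mem_toFinset.1 hq
    by_cases hpi : evP p (l i) = 0
    · by_cases hpj : evP p (l j) = 0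
      · exact absurd (hmeet i j hij q p hqi hqj hpi hpj) hqp
      · exact eval_prod_filter_eq_zero (mem_univ j) hpj hqj
    · exact eval_prod_filter_eq_zero (mem_univ i) hpi hqi
  obtain ⟨P, hPdeg, hP⟩ := exists_totalDegree_le_eval_eq_of_separating hS.toFinset
    (fun p => ![p.1, p.2]) (fun p => ∏ k ∈ univ with evP p (l k) ≠ 0, l k) (n := d + 1)
    (fun p _ => (totalDegree_prod_le_card _ _ fun k _ =>
      hl k ▸ totalDegree_C_mul_X_add_C_mul_X_add_C_le_one ..).trans
        ((card_filter_le _ _).trans (card_fin _).le))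
    (fun p _ => eval_prod_filter_ne_zero _ _ _) (fun p _ => hvanish p) g
  exact ⟨P, hPdeg, fun p hp => hP p (hS.mem_toFinset.2 hp)⟩

theorem evaluation_at_intersection_points_surjective (d : ℕ) (a b c : Fin (d + 1) → ℂ)
    (l : Fin (d + 1) → P2)
    (hl : ∀ i, l i = C (a i) * X 0 + C (b i) * X 1 + C (c i))
    (hpar : ∀ i j, i ≠ j → a i * b j ≠ a j * b i)
    (hconc : ∀ i j k, i ≠ j → j ≠ k → i ≠ k →
      ¬ ∃ p : ℂ × ℂ, evP p (l i) = 0 ∧ evP p (l j) = 0 ∧ evP p (l k) = 0) :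
    ∀ g : ℂ × ℂ → ℂ, ∃ P : P2, P.totalDegree ≤ d + 1 ∧
      ∀ p : ℂ × ℂ, (∃ i j, i ≠ j ∧ evP p (l i) = 0 ∧ evP p (l j) = 0) → evP p P = g p :=
  evaluation_at_intersection_points_surjective_general d a b c l hl hpar
end
end
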